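/- arXiv:1305.2311 — 3 statements merged into one kernel-verified Lean document; each statement's English description precedes it below -/
import Mathlib

section
/- Let Λ be a Noetherian ring. The following are equivalent: (1) every finitely generated module X with Ext^n_Λ(X,Λ)=0 for all n≥1 is Gorenstein-projective; (2) for every finitely generated Λ-module M, the Gorenstein dimension of M equals sup{t ∈ ℤ : Ext^t_Λ(M,Λ) ≠ 0} (with the convention that both sides may be infinite). -/
open CategoryTheory Limits

noncomputable section

namespace Paper

universe w v u

variable {C : Type u} [Category.{v} C] [Abelian C]

/-- Vanishing of `Ext^n(A,B)` (Ext via left derived functors of Hom; needs enough projectives). -/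
def ExtVanish [EnoughProjectives C] (A B : C) (n : ℕ) : Prop :=
  Subsingleton (((_root_.Ext ℤ C n).obj (Opposite.op A)).obj B)

/-- A totally acyclic complex of projectives: an acyclic complex of projectives which stays
acyclic after applying `Hom(-, P)` for every projective `P`. -/
structure IsTotallyAcyclic (K : CochainComplex C ℤ) : Prop where
  projective : ∀ i, Projective (K.X i)
  exactAt : ∀ i, K.ExactAt i
  homExactAt : ∀ (P : C), Projective P → ∀ i,
    ((((preadditiveYoneda.obj P).mapHomologicalComplex _).obj K.op)).ExactAt i

/-- Gorenstein-projective objects: objects of the form `Coker(X⁻¹ → X⁰)` for a totally acyclic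
complex of projectives. -/
def IsGorensteinProjective (A : C) : Prop :=
  ∃ K : CochainComplex C ℤ, IsTotallyAcyclic K ∧ Nonempty (A ≅ cokernel (K.d (-1) 0))

/-- The resolution dimension of `A` relative to a class `S` of objects is at most `n`:
there is an exact sequence `0 → X_m → ⋯ → X_0 → A → 0` with `m ≤ n` and all `X_i ∈ S`. -/
def ResDimLE (S : Set C) : ℕ → C → Prop
  | 0, A => A ∈ S
  | (n+1), A => A ∈ S ∨ ∃ (X : C) (f : X ⟶ A), X ∈ S ∧ Epi f ∧ ResDimLE S n (kernel f)

/-- The resolution dimension of `A` relative to `S`, as an element of `ℕ∞` (`⊤` if there is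
no finite resolution by objects of `S`). -/
def ResDim (S : Set C) (A : C) : ℕ∞ :=
  sInf {n : ℕ∞ | ∃ m : ℕ, n = (m : ℕ∞) ∧ ResDimLE S m A}

/-- The projective dimension of `A` is at most `n`. -/
def ProjDimLE (n : ℕ) (A : C) : Prop :=
  ResDimLE {P : C | Projective P} n A

/-- The coresolution dimension of `A` relative to a class `S` is at most `n`. -/
def CoresDimLE (S : Set C) : ℕ → C → Prop
  | 0, A => A ∈ S
  | (n+1), A => A ∈ S ∨ ∃ (X : C) (f : A ⟶ X), X ∈ S ∧ Mono f ∧ CoresDimLE S n (cokernel f)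

/-- The injective dimension of `A` is at most `n`. -/
def InjDimLE (n : ℕ) (A : C) : Prop :=
  CoresDimLE {I : C | Injective I} n A

/-- A resolving subcategory: contains the projectives, closed under isomorphisms, extensions
and kernels of epimorphisms. -/
structure IsResolving (S : Set C) : Prop where
  projMem : ∀ P : C, Projective P → P ∈ S
  isoClosed : ∀ {A B : C}, (A ≅ B) → A ∈ S → B ∈ S
  extClosed : ∀ (Sc : ShortComplex C), Sc.ShortExact → Sc.X₁ ∈ S → Sc.X₃ ∈ S → Sc.X₂ ∈ S
  kernelClosed : ∀ (Sc : ShortComplex C), Sc.ShortExact → Sc.X₂ ∈ S → Sc.X₃ ∈ S → Sc.X₁ ∈ S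

/-- A complete hereditary cotorsion pair `(X, Y)` in an abelian category with enough
projectives: `Ext^n(X,Y) = 0` for `n ≥ 1`, and every object admits approximation sequences
`0 → Y_A → X_A → A → 0` and `0 → A → Y^A → X^A → 0`. -/
structure IsCotorsionPair [EnoughProjectives C] (X Y : Set C) : Prop where
  isoClosedX : ∀ {A B : C}, (A ≅ B) → A ∈ X → B ∈ X
  isoClosedY : ∀ {A B : C}, (A ≅ B) → A ∈ Y → B ∈ Y
  ext_vanish : ∀ A ∈ X, ∀ B ∈ Y, ∀ n : ℕ, 1 ≤ n → ExtVanish A B n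
  left_approx : ∀ A : C, ∃ Sc : ShortComplex C, Sc.ShortExact ∧
    Sc.X₁ ∈ Y ∧ Sc.X₂ ∈ X ∧ Nonempty (Sc.X₃ ≅ A)
  right_approx : ∀ A : C, ∃ Sc : ShortComplex C, Sc.ShortExact ∧
    Nonempty (Sc.X₁ ≅ A) ∧ Sc.X₂ ∈ Y ∧ Sc.X₃ ∈ X

/-- A morphism factors through a projective object. -/
def FactorsThroughProjective {A B : C} (f : A ⟶ B) : Prop :=
  ∃ (P : C) (_ : Projective P) (g : A ⟶ P) (h : P ⟶ B), g ≫ h = f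

/-- Two morphisms are equal in the stable category modulo projectives. -/
def StablyEq {A B : C} (f g : A ⟶ B) : Prop :=
  FactorsThroughProjective (f - g)

/-- `A` belongs to `add T`: it is a direct summand of a finite direct sum of copies of `T`. -/
def MemAdd {D : Type*} [Category D] [Preadditive D] [HasFiniteBiproducts D] (T A : D) : Prop :=
  ∃ (n : ℕ) (s : A ⟶ ⨁ (fun _ : Fin n => T)) (r : (⨁ (fun _ : Fin n => T)) ⟶ A), s ≫ r = 𝟙 A

/-- A finitely generated Gorenstein-projective module: a cokernel in a totally acyclic
complex of finitely generated projective modules. -/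
def IsFGGorensteinProjective {R : Type u} [Ring R] (A : ModuleCat.{u} R) : Prop :=
  ∃ K : CochainComplex (ModuleCat.{u} R) ℤ, IsTotallyAcyclic K ∧
    (∀ i, Module.Finite R (K.X i)) ∧ Nonempty (A ≅ cokernel (K.d (-1) 0))

/-- The Gorenstein dimension of a module is at most `n`: it admits a resolution of length
`≤ n` by finitely generated Gorenstein-projective modules. -/
def GdimLE {R : Type u} [Ring R] (n : ℕ) (M : ModuleCat.{u} R) : Prop :=
  ResDimLE {G : ModuleCat.{u} R | IsFGGorensteinProjective G} n M

/-- The Gorenstein dimension of a module, as an element of `ℕ∞`. -/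
def Gdim {R : Type u} [Ring R] (M : ModuleCat.{u} R) : ℕ∞ :=
  sInf {n : ℕ∞ | ∃ m : ℕ, n = (m : ℕ∞) ∧ GdimLE m M}

/-- The global dimension of a ring is at most `n`. -/
def GlobalDimLE (Γ : Type u) [Ring Γ] (n : ℕ) : Prop :=
  ∀ M : ModuleCat.{u} Γ, ProjDimLE n M

/-- The global dimension of a ring, as an element of `ℕ∞`. -/
def GlobalDim (Γ : Type u) [Ring Γ] : ℕ∞ :=
  sInf {n : ℕ∞ | ∃ m : ℕ, n = (m : ℕ∞) ∧ GlobalDimLE Γ m}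

/-- The supremum of the degrees `t` with `Ext^t(M, Λ) ≠ 0`, as an element of `ℕ∞`
(the supremum of the empty set is `0`, of an unbounded set is `⊤`). -/
def ExtSup {Λ : Type u} [Ring Λ] (M : ModuleCat.{u} Λ) : ℕ∞ :=
  sSup {n : ℕ∞ | ∃ t : ℕ, n = (t : ℕ∞) ∧ ¬ ExtVanish M (ModuleCat.of Λ Λ) t}

section Infra

variable {R : Type*} [Ring R]

lemma isZero_iff_subsingleton (M : ModuleCat R) : IsZero M ↔ Subsingleton (M : Type _) := by
  constructor
  · intro h
    refine ⟨fun a b => ?_⟩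
    have : (𝟙 M : M ⟶ M) = 0 := h.eq_of_src _ _
    have ha : ∀ x : M, x = 0 := fun x => by
      calc x = (𝟙 M : M ⟶ M) x := rfl
      _ = (0 : M ⟶ M) x := by rw [this]
      _ = 0 := rfl
    rw [ha a, ha b]
  · intro h
    exact ModuleCat.isZero_of_subsingleton M

end Infra

section Mod

variable {Λ : Type u} [Ring Λ]

lemma extVanish_iff_exactAt {A : ModuleCat.{u} Λ} (P : ProjectiveResolution A)
    (Y : ModuleCat.{u} Λ) (n : ℕ) :
    ExtVanish A Y n ↔ (P.complex.linearYonedaObj ℤ Y).ExactAt n := by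
  rw [HomologicalComplex.exactAt_iff_isZero_homology, ExtVanish]
  rw [← isZero_iff_subsingleton]
  constructor
  · intro h
    exact IsZero.of_iso h (P.isoExt (R := ℤ) n Y).symm
  · intro h
    exact IsZero.of_iso h (P.isoExt (R := ℤ) n Y)

lemma extVanish_iff_of_iso {A B : ModuleCat.{u} Λ} (e : A ≅ B) (Y : ModuleCat.{u} Λ) (n : ℕ) :
    ExtVanish A Y n ↔ ExtVanish B Y n := by
  have e' := ((_root_.Ext ℤ (ModuleCat.{u} Λ) n).mapIso e.op.symm).app Y
  have Eq : (((_root_.Ext ℤ (ModuleCat.{u} Λ) n).obj (Opposite.op A)).obj Y : Type _) ≃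
      (((_root_.Ext ℤ (ModuleCat.{u} Λ) n).obj (Opposite.op B)).obj Y : Type _) :=
    ((forget _).mapIso (((_root_.Ext ℤ (ModuleCat.{u} Λ) n).mapIso e.op.symm).app Y)).toEquiv
  unfold ExtVanish
  constructor
  · intro h
    exact Eq.symm.subsingleton
  · intro h
    exact Eq.subsingleton

section Prepend
variable (T : ShortComplex (ModuleCat.{u} Λ)) (Q : ProjectiveResolution T.X₁)

/-- The chain complex obtained by prepending `T.X₂` to a projective resolution of `T.X₁`. -/
def prependC : ChainComplex (ModuleCat.{u} Λ) ℕ :=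
  ChainComplex.of
    (fun n => match n with | 0 => T.X₂ | (n+1) => Q.complex.X n)
    (fun n => match n with
      | 0 => Q.π.f 0 ≫ T.f
      | (n+1) => Q.complex.d (n+1) n)
    (fun n => match n with
      | 0 => by
          show Q.complex.d 1 0 ≫ (Q.π.f 0 ≫ T.f) = 0
          erw [← Category.assoc, Q.complex_d_comp_π_f_zero, zero_comp]
      | (n+1) => by
          show Q.complex.d (n+2) (n+1) ≫ Q.complex.d (n+1) n = 0
          simp)

lemma prependC_d10 : (prependC T Q).d 1 0 = Q.π.f 0 ≫ T.f :=
  by simp [prependC, ChainComplex.of.d]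

lemma prependC_d_succ (n : ℕ) :
    (prependC T Q).d (n+2) (n+1) = Q.complex.d (n+1) n :=
  by simp [prependC, ChainComplex.of.d]

lemma prepend_exactAt (hT : T.ShortExact) (n : ℕ) : (prependC T Q).ExactAt (n+1) := by
  rw [HomologicalComplex.exactAt_iff' _ (n+2) (n+1) n (by simp) (by simp),
    ShortComplex.moduleCat_exact_iff]
  intro x hx
  match n with
  | 0 =>
    -- x : Q.complex.X 0, with (π₀ ≫ T.f) x = 0
    have hinj : Function.Injective T.f := (ModuleCat.mono_iff_injective T.f).1 hT.mono_f
    have hx0 : (Q.π.f 0) x = 0 := by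
      apply hinj
      have h1 : ((prependC T Q).d 1 0) x = 0 := hx
      rw [prependC_d10] at h1
      exact h1.trans (map_zero _).symm
    have := (ShortComplex.moduleCat_exact_iff _).1 Q.exact₀ x hx0
    obtain ⟨y, hy⟩ := this
    refine ⟨y, ?_⟩
    show ((prependC T Q).d 2 1) y = x
    rw [prependC_d_succ T Q 0]
    exact hy
  | (m+1) =>
    have hx' : (Q.complex.d (m+1) m) x = 0 := by
      have h1 : ((prependC T Q).d (m+2) (m+1)) x = 0 := hx
      rw [prependC_d_succ T Q m] at h1
      exact h1
    obtain ⟨y, hy⟩ := (ShortComplex.moduleCat_exact_iff _).1 (Q.exact_succ m) x hx'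
    refine ⟨y, ?_⟩
    show ((prependC T Q).d (m+3) (m+2)) y = x
    rw [prependC_d_succ T Q (m+1)]
    exact hy

/-- Prepended projective resolution of `T.X₃`. -/
def prependRes (hT : T.ShortExact) (hP2 : Projective T.X₂) : ProjectiveResolution T.X₃ where
  complex := prependC T Q
  projective := fun n => match n with
    | 0 => hP2
    | (n+1) => Q.projective n
  π := (ChainComplex.toSingle₀Equiv _ _).symm
    ⟨T.g, by erw [prependC_d10, Category.assoc, T.zero, comp_zero]⟩
  quasiIso := ⟨fun n => by
    cases n with
    | zero =>
      rw [ChainComplex.quasiIsoAt₀_iff, ShortComplex.quasiIso_iff_of_zeros']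
      · have hexact : (ShortComplex.mk ((prependC T Q).d 1 0) T.g
            (by erw [prependC_d10, Category.assoc, T.zero, comp_zero])).Exact := by
          rw [ShortComplex.moduleCat_exact_iff]
          intro x hx
          obtain ⟨a, ha⟩ := (ShortComplex.moduleCat_exact_iff _).1 hT.exact x hx
          obtain ⟨y, hy⟩ := (ModuleCat.epi_iff_surjective (Q.π.f 0)).1 inferInstance a
          refine ⟨y, ?_⟩
          show ((prependC T Q).d 1 0) y = x
          rw [prependC_d10]
          show T.f ((Q.π.f 0) y) = x
          rw [hy, ha]
        have hepi : Epi T.g := hT.epi_g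
        refine (ShortComplex.exact_and_epi_g_iff_of_iso ?_).2 ⟨hexact, hepi⟩
        exact ShortComplex.isoMk (Iso.refl _) (Iso.refl _) (Iso.refl _)
          (by erw [Category.id_comp]) (by erw [Category.id_comp])
      all_goals rfl
    | succ n =>
      rw [quasiIsoAt_iff_exactAt']
      · exact prepend_exactAt T Q hT n
      · apply ChainComplex.exactAt_succ_single_obj⟩

end Prepend
lemma linearYonedaObj_exactAt_iff (Kc : ChainComplex (ModuleCat.{u} Λ) ℕ)
    (Y : ModuleCat.{u} Λ) (n : ℕ) :
    (Kc.linearYonedaObj ℤ Y).ExactAt (n+1) ↔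
      ∀ (φ : Kc.X (n+1) ⟶ Y), Kc.d (n+2) (n+1) ≫ φ = 0 →
        ∃ ψ : Kc.X n ⟶ Y, Kc.d (n+1) n ≫ ψ = φ := by
  rw [HomologicalComplex.exactAt_iff' _ n (n+1) (n+2) (by simp) (by simp),
    ShortComplex.moduleCat_exact_iff]
  constructor
  · intro h φ hφ
    obtain ⟨ψ, hψ⟩ := h φ hφ
    exact ⟨ψ, hψ⟩
  · intro h φ hφ
    obtain ⟨ψ, hψ⟩ := h φ hφ
    exact ⟨ψ, hψ⟩


section ShiftExt
variable (T : ShortComplex (ModuleCat.{u} Λ))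

/-- Dimension shifting along a short exact sequence with projective middle term. -/
lemma extVanish_succ_iff (hT : T.ShortExact) (hP2 : Projective T.X₂)
    (Y : ModuleCat.{u} Λ) (t : ℕ) (ht : 1 ≤ t) :
    ExtVanish T.X₃ Y (t+1) ↔ ExtVanish T.X₁ Y t := by
  obtain ⟨s, rfl⟩ : ∃ s, t = s + 1 := ⟨t-1, by omega⟩
  set Q := ProjectiveResolution.of T.X₁ with hQ
  rw [extVanish_iff_exactAt (prependRes T Q hT hP2) Y,
    extVanish_iff_exactAt Q Y, linearYonedaObj_exactAt_iff, linearYonedaObj_exactAt_iff]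
  show (∀ (φ : (prependC T Q).X (s+2) ⟶ Y), (prependC T Q).d (s+3) (s+2) ≫ φ = 0 →
        ∃ ψ : (prependC T Q).X (s+1) ⟶ Y, (prependC T Q).d (s+2) (s+1) ≫ ψ = φ) ↔ _
  constructor
  · intro h φ hφ
    obtain ⟨ψ, hψ⟩ := h φ (by
      show (prependC T Q).d (s+3) (s+2) ≫ φ = 0
      rw [prependC_d_succ T Q (s+1)]
      exact hφ)
    refine ⟨ψ, ?_⟩
    rw [← prependC_d_succ T Q s]
    exact hψ
  · intro h φ hφ
    obtain ⟨ψ, hψ⟩ := h φ (by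
      have h1 : (prependC T Q).d (s+3) (s+2) ≫ φ = 0 := hφ
      rw [prependC_d_succ T Q (s+1)] at h1
      exact h1)
    refine ⟨ψ, ?_⟩
    show (prependC T Q).d (s+2) (s+1) ≫ ψ = φ
    rw [prependC_d_succ T Q s]
    exact hψ

/-- Concrete characterisation of the vanishing of `Ext¹` along a short exact sequence
with projective middle term: every map out of the kernel extends. -/
lemma extVanish_one_iff (hT : T.ShortExact) (hP2 : Projective T.X₂) (Y : ModuleCat.{u} Λ) :
    ExtVanish T.X₃ Y 1 ↔ ∀ φ : T.X₁ ⟶ Y, ∃ Φ : T.X₂ ⟶ Y, T.f ≫ Φ = φ := by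
  set Q := ProjectiveResolution.of T.X₁ with hQ
  rw [extVanish_iff_exactAt (prependRes T Q hT hP2) Y, linearYonedaObj_exactAt_iff]
  show (∀ (φ : (prependC T Q).X 1 ⟶ Y), (prependC T Q).d 2 1 ≫ φ = 0 →
        ∃ ψ : (prependC T Q).X 0 ⟶ Y, (prependC T Q).d 1 0 ≫ ψ = φ) ↔ _
  constructor
  · intro h φbar
    obtain ⟨ψ, hψ⟩ := h (Q.π.f 0 ≫ φbar) (by
      show (prependC T Q).d 2 1 ≫ (Q.π.f 0 ≫ φbar) = 0
      erw [prependC_d_succ T Q 0, ← Category.assoc, Q.complex_d_comp_π_f_zero, zero_comp])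
    refine ⟨ψ, ?_⟩
    have h2 : (prependC T Q).d 1 0 ≫ ψ = Q.π.f 0 ≫ φbar := hψ
    erw [prependC_d10, Category.assoc] at h2
    exact (cancel_epi (Q.π.f 0)).1 h2
  · intro h φ hφ
    have hφ2 : Q.complex.d 1 0 ≫ φ = 0 := by
      rw [← prependC_d_succ T Q 0]
      exact hφ
    have hepi : Epi (ShortComplex.mk _ _ Q.complex_d_comp_π_f_zero).g := by
      show Epi (Q.π.f 0); infer_instance
    obtain ⟨Φ, hΦ⟩ := h (Q.exact₀.desc φ hφ2)
    refine ⟨Φ, ?_⟩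
    show (prependC T Q).d 1 0 ≫ Φ = φ
    erw [prependC_d10, Category.assoc, hΦ]
    exact Q.exact₀.g_desc φ hφ2

end ShiftExt

/-- Descend a linear map along a surjection whose kernel it kills. -/
lemma exists_lift_of_ker_le {M P Y : Type u} [AddCommGroup M] [Module Λ M]
    [AddCommGroup P] [Module Λ P] [AddCommGroup Y] [Module Λ Y]
    (f : M →ₗ[Λ] P) (hf : Function.Surjective f) (g : M →ₗ[Λ] Y)
    (h : LinearMap.ker f ≤ LinearMap.ker g) :
    ∃ h' : P →ₗ[Λ] Y, h'.comp f = g := by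
  refine ⟨(((LinearMap.ker f).liftQ g h).comp
    (f.quotKerEquivOfSurjective hf).symm.toLinearMap), ?_⟩
  ext x
  have e1 : (f.quotKerEquivOfSurjective hf).symm (f x) = Submodule.Quotient.mk x := by
    apply (f.quotKerEquivOfSurjective hf).injective
    simp [LinearMap.quotKerEquivOfSurjective]
  simp [e1]

-- free cover
/-- The free module on the underlying set of `B`. -/
abbrev coverF (B : ModuleCat.{u} Λ) : ModuleCat.{u} Λ := ModuleCat.of Λ (↑B →₀ Λ)

/-- The canonical surjection from the free module on `B` onto `B`. -/
def coverπ (B : ModuleCat.{u} Λ) : coverF B ⟶ B := ModuleCat.ofHom (Finsupp.linearCombination Λ id)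

lemma coverπ_surjective (B : ModuleCat.{u} Λ) : Function.Surjective (coverπ B) :=
  Finsupp.linearCombination_id_surjective Λ B

instance (B : ModuleCat.{u} Λ) : Projective (coverF B) :=
  (IsProjective.iff_projective (↑B →₀ Λ)).1 inferInstance

/-- Kernel of a morphism, as a concrete module. -/
abbrev kerM {A B : ModuleCat.{u} Λ} (f : A ⟶ B) : ModuleCat.{u} Λ :=
  ModuleCat.of Λ (LinearMap.ker f.hom)

/-- Inclusion of the concrete kernel. -/
def kerι {A B : ModuleCat.{u} Λ} (f : A ⟶ B) : kerM f ⟶ A := ModuleCat.ofHom (LinearMap.ker f.hom).subtype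

/-- The short complex `ker f → A → B`. -/
abbrev kerSES {A B : ModuleCat.{u} Λ} (f : A ⟶ B) : ShortComplex (ModuleCat.{u} Λ) :=
  ShortComplex.mk (kerι f) f (by
    ext x
    exact x.2)

lemma kerSES_shortExact {A B : ModuleCat.{u} Λ} (f : A ⟶ B) (hf : Function.Surjective f) :
    (kerSES f).ShortExact :=
  { exact := (ShortComplex.moduleCat_exact_iff _).2 (by
      intro x hx
      exact ⟨⟨x, hx⟩, rfl⟩)
    mono_f := (ModuleCat.mono_iff_injective _).2 (Submodule.injective_subtype _)
    epi_g := (ModuleCat.epi_iff_surjective _).2 hf }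



section Fragments
variable (T : ShortComplex (ModuleCat.{u} Λ))

/-- The free module covering the middle of a short exact sequence compatibly. -/
abbrev covB : ModuleCat.{u} Λ := ModuleCat.of Λ ((↑T.X₁ →₀ Λ) × (↑T.X₃ →₀ Λ))

instance : Projective (covB T) :=
  (IsProjective.iff_projective ((↑T.X₁ →₀ Λ) × (↑T.X₃ →₀ Λ))).1 inferInstance

/-- A lift of the free cover of `T.X₃` through the epimorphism `T.g`. -/
def covlift (hT : T.ShortExact) : (↑T.X₃ →₀ Λ) →ₗ[Λ] ↑T.X₂ :=
  (Module.projective_lifting_property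
    (h := inferInstanceAs (Module.Projective Λ (↑T.X₃ →₀ Λ)))
    T.g.hom (coverπ T.X₃).hom
    ((ModuleCat.epi_iff_surjective T.g).1 hT.epi_g)).choose

lemma covlift_spec (hT : T.ShortExact) (y : (↑T.X₃ →₀ Λ)) :
    T.g (covlift T hT y) = coverπ T.X₃ y := by
  have h := (Module.projective_lifting_property
    (h := inferInstanceAs (Module.Projective Λ (↑T.X₃ →₀ Λ)))
    T.g.hom (coverπ T.X₃).hom
    ((ModuleCat.epi_iff_surjective T.g).1 hT.epi_g)).choose_spec
  exact LinearMap.congr_fun h y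

/-- The compatible surjection from `covB` onto the middle term. -/
def covβ (hT : T.ShortExact) : covB T ⟶ T.X₂ :=
  ModuleCat.ofHom (LinearMap.coprod (LinearMap.comp (T.f.hom : ↑T.X₁ →ₗ[Λ] ↑T.X₂) (coverπ T.X₁).hom) (covlift T hT))

lemma covβ_apply (hT : T.ShortExact) (x : ↑T.X₁ →₀ Λ) (y : ↑T.X₃ →₀ Λ) :
    covβ T hT (x, y) = T.f (coverπ T.X₁ x) + covlift T hT y := rfl

lemma covβ_surjective (hT : T.ShortExact) : Function.Surjective (covβ T hT) := by
  intro b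
  obtain ⟨y, hy⟩ := coverπ_surjective T.X₃ (T.g b)
  have hker : T.g (b - covlift T hT y) = 0 := by
    rw [map_sub, covlift_spec T hT, hy, sub_self]
  obtain ⟨a, ha⟩ := (ShortComplex.moduleCat_exact_iff _).1 hT.exact _ hker
  obtain ⟨x, hx⟩ := coverπ_surjective T.X₁ a
  refine ⟨(x, y), ?_⟩
  rw [covβ_apply, hx, ha]
  abel

/-- Build a short exact sequence in `ModuleCat` from concrete data. -/
lemma shortExact_mk'' {X₁ X₂ X₃ : ModuleCat.{u} Λ} (f : X₁ ⟶ X₂) (g : X₂ ⟶ X₃) (w : f ≫ g = 0)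
    (hf : Function.Injective f) (hg : Function.Surjective g)
    (hex : ∀ x, g x = 0 → ∃ y, f y = x) : (ShortComplex.mk f g w).ShortExact :=
  { exact := (ShortComplex.moduleCat_exact_iff _).2 hex
    mono_f := (ModuleCat.mono_iff_injective f).2 hf
    epi_g := (ModuleCat.epi_iff_surjective g).2 hg }

/-- The first map of the horseshoe kernel sequence. -/
def jmap (hT : T.ShortExact) : kerM (coverπ T.X₁) ⟶ kerM (covβ T hT) :=
  ModuleCat.ofHom <| LinearMap.codRestrict _
    (LinearMap.comp (LinearMap.inl Λ _ _) (Submodule.subtype _)) (fun x => by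
      show covβ T hT (x.1, 0) = 0
      rw [covβ_apply]
      have hx : coverπ T.X₁ x.1 = 0 := x.2
      rw [hx, map_zero, map_zero, add_zero])

/-- The second map of the horseshoe kernel sequence. -/
def rmap (hT : T.ShortExact) : kerM (covβ T hT) ⟶ kerM (coverπ T.X₃) :=
  ModuleCat.ofHom <| LinearMap.codRestrict _
    (LinearMap.comp (LinearMap.snd Λ _ _) (Submodule.subtype _)) (fun z => by
      have hz : covβ T hT z.1 = 0 := z.2
      have h2 : T.g (covβ T hT z.1) = 0 := by rw [hz, map_zero]
      show coverπ T.X₃ z.1.2 = 0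
      rw [show z.1 = (z.1.1, z.1.2) from rfl, covβ_apply] at h2
      have h3 : ∀ a : ↑T.X₁, T.g (T.f a) = 0 := fun a => ConcreteCategory.congr_hom T.zero a
      rw [map_add, h3, zero_add, covlift_spec] at h2
      exact h2)

lemma rmap_surjective (hT : T.ShortExact) : Function.Surjective (rmap T hT) := by
  have hfinj : Function.Injective T.f := (ModuleCat.mono_iff_injective T.f).1 hT.mono_f
  rintro ⟨y, hy⟩
  have hker : T.g (covlift T hT y) = 0 := by
    rw [covlift_spec]
    exact hy
  obtain ⟨a, ha⟩ := (ShortComplex.moduleCat_exact_iff _).1 hT.exact _ hker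
  obtain ⟨x, hx⟩ := coverπ_surjective T.X₁ a
  have hmem : covβ T hT (-x, y) = 0 := by
    rw [covβ_apply, map_neg, map_neg, hx, ha]
    abel
  refine ⟨⟨(-x, y), hmem⟩, ?_⟩
  apply Subtype.ext
  rfl

/-- The horseshoe kernel short complex. -/
def horseU (hT : T.ShortExact) : ShortComplex (ModuleCat.{u} Λ) :=
  ShortComplex.mk (jmap T hT) (rmap T hT) (by
    ext x
    rfl)

lemma horseU_shortExact (hT : T.ShortExact) : (horseU T hT).ShortExact := by
  have hfinj : Function.Injective T.f := (ModuleCat.mono_iff_injective T.f).1 hT.mono_f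
  apply shortExact_mk''
  · intro x x' hxx
    apply Subtype.ext
    have := congrArg (Subtype.val) hxx
    exact congrArg Prod.fst this
  · exact rmap_surjective T hT
  · rintro ⟨⟨x, y⟩, hmem⟩ hz
    have hy : y = 0 := congrArg Subtype.val hz
    subst hy
    have hβ : covβ T hT (x, 0) = 0 := hmem
    rw [covβ_apply, map_zero, add_zero] at hβ
    have hα : coverπ T.X₁ x = 0 := by
      apply hfinj
      rw [hβ, map_zero]
    refine ⟨⟨x, hα⟩, ?_⟩
    apply Subtype.ext
    rfl

/-- Middle vanishing: if `Ext^s` vanishes on the two extreme terms of a short exact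
sequence, it vanishes on the middle term (`s ≥ 1`). -/
lemma middle_vanish (Y : ModuleCat.{u} Λ) : ∀ (s : ℕ), 1 ≤ s →
    ∀ (T : ShortComplex (ModuleCat.{u} Λ)), T.ShortExact →
    ExtVanish T.X₁ Y s → ExtVanish T.X₃ Y s → ExtVanish T.X₂ Y s := by
  intro s
  induction s with
  | zero => omega
  | succ s ih =>
    intro _ T hT hA hC
    by_cases hs0 : s = 0
    · -- base case : s + 1 = 1
      subst hs0
      have hfinj : Function.Injective T.f := (ModuleCat.mono_iff_injective T.f).1 hT.mono_f
      refine (extVanish_one_iff (kerSES (covβ T hT))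
        (kerSES_shortExact _ (covβ_surjective T hT))
        (inferInstanceAs (Projective (covB T))) Y).2 ?_
      intro φ
      -- extend φ ∘ jmap over coverF T.X₁
      obtain ⟨ψ, hψ⟩ := (extVanish_one_iff (kerSES (coverπ T.X₁))
        (kerSES_shortExact _ (coverπ_surjective T.X₁))
        (inferInstanceAs (Projective (coverF T.X₁))) Y).1 hA ((jmap T hT) ≫ φ)
      let φA : kerM (covβ T hT) ⟶ Y := φ
      let ρ : kerM (covβ T hT) ⟶ Y :=
        ModuleCat.ofHom (LinearMap.comp (LinearMap.comp ψ.hom (LinearMap.fst Λ _ _)) (Submodule.subtype _))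
      let φ'' : kerM (covβ T hT) ⟶ Y := φA - ρ
      have hφ''_apply : ∀ z : ↑(kerM (covβ T hT)), φ'' z = φ z - ψ z.1.1 := fun z => rfl
      have hker : LinearMap.ker (rmap T hT).hom ≤ LinearMap.ker φ''.hom := by
        rintro ⟨⟨x, y⟩, hmem⟩ hz
        have hy : y = 0 := congrArg Subtype.val hz
        subst hy
        have hβ : covβ T hT (x, 0) = 0 := hmem
        rw [covβ_apply, map_zero, add_zero] at hβ
        have hα : coverπ T.X₁ x = 0 := by
          apply hfinj
          rw [hβ, map_zero]
        have hj : jmap T hT ⟨x, hα⟩ = ⟨(x, 0), hmem⟩ := by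
          apply Subtype.ext
          rfl
        have h1 : φ (⟨(x, 0), hmem⟩ : kerM (covβ T hT)) = ψ x := by
          rw [← hj]
          have := ConcreteCategory.congr_hom hψ (⟨x, hα⟩ : kerM (coverπ T.X₁))
          exact this.symm
        show φ'' _ = 0
        rw [hφ''_apply]
        rw [h1]
        exact sub_self _
      obtain ⟨χ, hχ⟩ := exists_lift_of_ker_le (Λ := Λ) (rmap T hT).hom
        (rmap_surjective T hT) φ''.hom hker
      obtain ⟨χt, hχt⟩ := (extVanish_one_iff (kerSES (coverπ T.X₃))
        (kerSES_shortExact _ (coverπ_surjective T.X₃))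
        (inferInstanceAs (Projective (coverF T.X₃))) Y).1 hC (ModuleCat.ofHom χ)
      refine ⟨ModuleCat.ofHom (LinearMap.comp ψ.hom (LinearMap.fst Λ _ _) +
        LinearMap.comp χt.hom (LinearMap.snd Λ _ _)), ?_⟩
      ext z
      obtain ⟨⟨x, y⟩, hmem⟩ := z
      show ψ x + χt y = φ ⟨(x, y), hmem⟩
      have h2 : χ (rmap T hT ⟨(x, y), hmem⟩) = φ'' ⟨(x, y), hmem⟩ :=
        DFunLike.congr_fun hχ _
      have hymem : y ∈ LinearMap.ker (coverπ T.X₃).hom := (rmap T hT ⟨(x, y), hmem⟩).2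
      have h3 : χt y = χ (rmap T hT ⟨(x, y), hmem⟩) := by
        have := ConcreteCategory.congr_hom hχt (⟨y, hymem⟩ : kerM (coverπ T.X₃))
        exact this
      rw [h3, h2, hφ''_apply]
      show ψ x + (φ _ - ψ x) = φ _
      abel
    · -- inductive step
      have h1s : 1 ≤ s := by omega
      have eA := extVanish_succ_iff (kerSES (coverπ T.X₁))
        (kerSES_shortExact _ (coverπ_surjective T.X₁))
        (inferInstanceAs (Projective (coverF T.X₁))) Y s h1s
      have eB := extVanish_succ_iff (kerSES (covβ T hT))
        (kerSES_shortExact _ (covβ_surjective T hT))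
        (inferInstanceAs (Projective (covB T))) Y s h1s
      have eC := extVanish_succ_iff (kerSES (coverπ T.X₃))
        (kerSES_shortExact _ (coverπ_surjective T.X₃))
        (inferInstanceAs (Projective (coverF T.X₃))) Y s h1s
      have hmid := ih h1s (horseU T hT) (horseU_shortExact T hT)
        (eA.1 hA) (eC.1 hC)
      exact eB.2 hmid

/-- If `Ext^s` vanishes on the kernel and `Ext` vanishes on the middle term in all positive
degrees, then `Ext^{s+1}` vanishes on the quotient of a short exact sequence. -/
lemma quotient_vanish (hT : T.ShortExact) (Y : ModuleCat.{u} Λ) (s : ℕ) (hs : 1 ≤ s)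
    (hA : ExtVanish T.X₁ Y s) (hB : ∀ r : ℕ, 1 ≤ r → ExtVanish T.X₂ Y r) :
    ExtVanish T.X₃ Y (s+1) := by
  have hfinj : Function.Injective T.f := (ModuleCat.mono_iff_injective T.f).1 hT.mono_f
  have hgsurj : Function.Surjective T.g := (ModuleCat.epi_iff_surjective T.g).1 hT.epi_g
  set δ : coverF T.X₂ ⟶ T.X₂ := coverπ T.X₂ with hδ
  set q : coverF T.X₂ ⟶ T.X₃ := δ ≫ T.g with hq
  have hqs : Function.Surjective q := by
    intro c
    obtain ⟨b, hb⟩ := hgsurj c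
    obtain ⟨x, hx⟩ := coverπ_surjective T.X₂ b
    exact ⟨x, by show T.g (δ x) = c; rw [hx, hb]⟩
  have eC := extVanish_succ_iff (kerSES q) (kerSES_shortExact q hqs)
    (inferInstanceAs (Projective (coverF T.X₂))) Y s hs
  refine eC.2 ?_
  -- the comparison map `ker q → T.X₁`
  set e : (↑T.X₁) ≃ₗ[Λ] LinearMap.range T.f.hom := LinearEquiv.ofInjective T.f.hom hfinj with he
  have hrange : ∀ x : ↑(kerM q), δ x.1 ∈ LinearMap.range T.f.hom := by
    intro x
    have hx : T.g (δ x.1) = 0 := x.2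
    obtain ⟨a, ha⟩ := (ShortComplex.moduleCat_exact_iff _).1 hT.exact _ hx
    exact ⟨a, ha⟩
  set wmap : kerM q ⟶ T.X₁ :=
    ModuleCat.ofHom (LinearMap.comp (e.symm.toLinearMap)
      (LinearMap.codRestrict _ (LinearMap.comp δ.hom (Submodule.subtype _)) hrange)) with hw
  have hwval : ∀ x : ↑(kerM q), T.f (wmap x) = δ x.1 := by
    intro x
    have h1 : T.f (wmap x) = (e (wmap x) : ↑T.X₂) := rfl
    rw [h1]
    show ((e (e.symm ⟨δ x.1, hrange x⟩)) : ↑T.X₂) = δ x.1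
    rw [e.apply_symm_apply]
  set ι' : kerM δ ⟶ kerM q :=
    ModuleCat.ofHom <| LinearMap.codRestrict _ (Submodule.subtype _) (fun x => by
      show T.g (δ x.1) = 0
      have hx : δ x.1 = 0 := x.2
      rw [hx, map_zero]) with hι'
  have hWzero : ι' ≫ wmap = 0 := by
    ext x
    apply hfinj
    show T.f (wmap (ι' x)) = T.f 0
    rw [hwval, map_zero]
    exact x.2
  set W : ShortComplex (ModuleCat.{u} Λ) := ShortComplex.mk ι' wmap hWzero with hW
  have hWse : W.ShortExact := by
    apply shortExact_mk''
    · intro x x' hxx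
      apply Subtype.ext
      exact congrArg (fun z : ↑(kerM q) => z.1) hxx
    · intro a
      obtain ⟨x, hx⟩ := coverπ_surjective T.X₂ (T.f a)
      have hxq : q x = 0 := by
        show T.g (δ x) = 0
        rw [hx]
        exact ConcreteCategory.congr_hom T.zero a
      refine ⟨⟨x, hxq⟩, ?_⟩
      apply hfinj
      rw [hwval]
      exact hx
    · intro x hx
      have hδx : δ x.1 = 0 := by
        rw [← hwval x, hx, map_zero]
      refine ⟨⟨x.1, hδx⟩, ?_⟩
      apply Subtype.ext
      rfl
  have hkerδ : ExtVanish (kerM δ) Y s :=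
    (extVanish_succ_iff (kerSES δ) (kerSES_shortExact δ (coverπ_surjective T.X₂))
      (inferInstanceAs (Projective (coverF T.X₂))) Y s hs).1 (hB (s+1) (by omega))
  exact middle_vanish Y s hs W hWse hkerδ hA

end Fragments

end Mod


section GProj
variable {Λ : Type u} [Ring Λ]
variable (K : CochainComplex (ModuleCat.{u} Λ) ℤ)

/-- The cocycle modules of a cochain complex. -/
def Zmod (j : ℤ) : ModuleCat.{u} Λ := kerM (K.d j (j+1))

/-- The corestriction of a differential onto a cocycle module. -/
def cmap (i j : ℤ) : K.X i ⟶ Zmod K j :=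
  ModuleCat.ofHom <| LinearMap.codRestrict _ (K.d i j).hom (fun x => by
    show K.d j (j+1) (K.d i j x) = 0
    have h := ConcreteCategory.congr_hom (K.d_comp_d i j (j+1)) x
    exact h)

lemma Kexact_concrete (hK : ∀ i, K.ExactAt i) (i j k : ℤ) (hij : i+1 = j) (hjk : j+1 = k) :
    ∀ x : ↑(K.X j), K.d j k x = 0 → ∃ y, K.d i j y = x := by
  subst hij; subst hjk
  have h := (HomologicalComplex.exactAt_iff' K i (i+1) (i+1+1)
    ((ComplexShape.up ℤ).prev_eq' (by simp)) ((ComplexShape.up ℤ).next_eq' (by simp))).1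
    (hK (i+1))
  exact (ShortComplex.moduleCat_exact_iff _).1 h

/-- The fundamental short exact sequences `0 → Z^i → X^i → Z^{i+1} → 0`. -/
def zses (i : ℤ) : ShortComplex (ModuleCat.{u} Λ) :=
  ShortComplex.mk (kerι (K.d i (i+1))) (cmap K i (i+1)) (by
    ext x
    apply Subtype.ext
    exact x.2)

lemma zses_shortExact (hK : ∀ i, K.ExactAt i) (i : ℤ) : (zses K i).ShortExact := by
  apply shortExact_mk''
  · exact Subtype.val_injective
  · intro z
    obtain ⟨y, hy⟩ := Kexact_concrete K hK i (i+1) (i+1+1) rfl rfl z.1 z.2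
    exact ⟨y, Subtype.ext hy⟩
  · intro x hx
    have hx' : K.d i (i+1) x = 0 := congrArg Subtype.val hx
    exact ⟨⟨x, hx'⟩, rfl⟩

/-- Extension property from total acyclicity: a map from `X^i` to a projective killing the
incoming differential factors through the next differential. -/
lemma tot_hom_ext (P : ModuleCat.{u} Λ) (hP : Projective P)
    (hhom : ∀ i, ((((preadditiveYoneda.obj P).mapHomologicalComplex _).obj K.op)).ExactAt i)
    (i j : ℤ) (hij : i + 1 = j) (ψ : K.X i ⟶ P) (hψ : K.d (i-1) i ≫ ψ = 0) :
    ∃ χ : K.X j ⟶ P, K.d i j ≫ χ = ψ := by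
  subst hij
  have h := (HomologicalComplex.exactAt_iff'
    ((((preadditiveYoneda.obj P).mapHomologicalComplex _).obj K.op)) (i+1) i (i-1)
    (((ComplexShape.up ℤ).symm).prev_eq' (by simp))
    (((ComplexShape.up ℤ).symm).next_eq' (by simp))).1 (hhom i)
  obtain ⟨χ, hχ⟩ := (ShortComplex.ab_exact_iff _).1 h ψ hψ
  exact ⟨χ, hχ⟩

/-- `Ext^1` vanishes on cocycle modules of a totally acyclic complex, for projective targets. -/
lemma zmod_ext_one (hK : IsTotallyAcyclic K) (P : ModuleCat.{u} Λ) (hP : Projective P)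
    (i j : ℤ) (hij : i + 1 = j) :
    ExtVanish (Zmod K j) P 1 := by
  subst hij
  refine (extVanish_one_iff (zses K i) (zses_shortExact K hK.exactAt i) (hK.projective i) P).2 ?_
  intro φ
  -- φ : Zmod K i ⟶ P; push to X^{i-1} and use total acyclicity
  obtain ⟨χ, hχ⟩ := tot_hom_ext K P hP (hK.homExactAt P hP) (i-1) i (by ring)
    (cmap K (i-1) i ≫ φ) (by
      ext x
      show φ (cmap K (i-1) i (K.d (i-1-1) (i-1) x)) = 0
      have h1 : cmap K (i-1) i (K.d (i-1-1) (i-1) x) = 0 := by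
        apply Subtype.ext
        exact ConcreteCategory.congr_hom (K.d_comp_d (i-1-1) (i-1) i) x
      rw [h1]; exact map_zero _)
  refine ⟨χ, ?_⟩
  ext z
  show χ z.1 = φ z
  obtain ⟨y, hy⟩ := Kexact_concrete K hK.exactAt (i-1) i (i+1) (by ring) rfl z.1 z.2
  have h2 : χ (K.d (i-1) i y) = (cmap K (i-1) i ≫ φ) y := ConcreteCategory.congr_hom hχ y
  rw [hy] at h2
  rw [h2]
  show φ (cmap K (i-1) i y) = φ z
  congr 1
  exact Subtype.ext hy

/-- `Ext^t` vanishes on cocycle modules of a totally acyclic complex in all degrees `t ≥ 1`. -/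
lemma zmod_ext_all (hK : IsTotallyAcyclic K) (P : ModuleCat.{u} Λ) (hP : Projective P) :
    ∀ (t : ℕ), 1 ≤ t → ∀ (j : ℤ), ExtVanish (Zmod K j) P t := by
  intro t
  induction t with
  | zero => omega
  | succ t ih =>
    intro _ j
    by_cases ht0 : t = 0
    · subst ht0
      exact zmod_ext_one K hK P hP (j-1) j (by ring)
    · have h1t : 1 ≤ t := by omega
      have e := extVanish_succ_iff (zses K (j-1)) (zses_shortExact K hK.exactAt (j-1))
        (hK.projective (j-1)) P t h1t
      have h := e.2 (ih h1t (j-1))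
      exact (extVanish_iff_of_iso
        (eqToIso (congrArg (Zmod K) (by ring : (j-1) + 1 = j))) P (t+1)).1 h

/-- The cokernel defining a Gorenstein projective module is isomorphic to a cocycle module. -/
def cokerIsoZmod (hK : IsTotallyAcyclic K) :
    cokernel (K.d (-1) 0) ≅ Zmod K 1 := by
  refine (ModuleCat.cokernelIsoRangeQuotient (K.d (-1) 0)) ≪≫
    (LinearEquiv.toModuleIso (LinearEquiv.ofBijective
      (Submodule.liftQ _ (cmap K 0 1).hom ?_) ⟨?_, ?_⟩))
  · -- range (d (-1) 0) ≤ ker (cmap 0 1)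
    rintro x ⟨y, rfl⟩
    apply Subtype.ext
    exact ConcreteCategory.congr_hom (K.d_comp_d (-1) 0 1) y
  · -- injective
    rw [← LinearMap.ker_eq_bot, Submodule.ker_liftQ_eq_bot]
    intro x hx
    have hx' : K.d 0 1 x = 0 := congrArg Subtype.val hx
    obtain ⟨y, hy⟩ := Kexact_concrete K hK.exactAt (-1) 0 1 (by ring) rfl x hx'
    exact ⟨y, hy⟩
  · -- surjective
    intro z
    obtain ⟨y, hy⟩ := Kexact_concrete K hK.exactAt 0 1 (1+1) rfl rfl z.1 z.2
    refine ⟨Submodule.Quotient.mk y, ?_⟩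
    apply Subtype.ext
    exact hy

/-- **Lemma A**: a finitely generated Gorenstein projective module has vanishing `Ext^t`
against any projective module (in degrees `t ≥ 1`). -/
lemma gproj_extVanish {G : ModuleCat.{u} Λ} (hG : IsFGGorensteinProjective G)
    (P : ModuleCat.{u} Λ) (hP : Projective P) (t : ℕ) (ht : 1 ≤ t) :
    ExtVanish G P t := by
  obtain ⟨K, hTA, _, ⟨e⟩⟩ := hG
  have h := zmod_ext_all K hTA P hP t ht 1
  exact (extVanish_iff_of_iso (e ≪≫ cokerIsoZmod K hTA) P t).2 h

end GProj


section AltComplex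
variable {Λ : Type u} [Ring Λ]

/-- The alternating totally acyclic complex `⋯ → P —1→ P —0→ P —1→ P → ⋯` on a
projective module `P`. -/
def altC (P : ModuleCat.{u} Λ) : CochainComplex (ModuleCat.{u} Λ) ℤ where
  X _ := P
  d i j := if i + 1 = j ∧ Even i then 𝟙 P else 0
  shape i j h := by
    rw [if_neg]
    rintro ⟨h1, -⟩
    exact h h1
  d_comp_d' i j k hij hjk := by
    rcases Int.even_or_odd i with he | ho
    · have hj : ¬ Even j := by
        simp only [ComplexShape.up_Rel] at hij
        subst hij
        simp [Int.even_add_one, he]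
      rw [if_neg (fun hc : j + 1 = k ∧ Even j => hj hc.2), comp_zero]
    · have hi : ¬ Even i := Int.not_even_iff_odd.2 ho
      rw [if_neg (fun hc : i + 1 = j ∧ Even i => hi hc.2), zero_comp]

lemma altC_d_even (P : ModuleCat.{u} Λ) {i j : ℤ} (hij : i + 1 = j) (h : Even i) :
    (altC P).d i j = 𝟙 P := if_pos ⟨hij, h⟩

lemma altC_d_odd (P : ModuleCat.{u} Λ) {i j : ℤ} (h : ¬ Even i) :
    (altC P).d i j = 0 := by
  show (if i + 1 = j ∧ Even i then 𝟙 P else 0) = 0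
  rw [if_neg]
  rintro ⟨-, h2⟩
  exact h h2

lemma altC_exactAt (P : ModuleCat.{u} Λ) (i : ℤ) : (altC P).ExactAt i := by
  rw [HomologicalComplex.exactAt_iff' _ (i-1) i (i+1)
    ((ComplexShape.up ℤ).prev_eq' (by simp)) ((ComplexShape.up ℤ).next_eq' (by simp)),
    ShortComplex.moduleCat_exact_iff]
  intro x hx
  rcases Int.even_or_odd i with he | ho
  · have h1 : (altC P).d i (i+1) = 𝟙 P := altC_d_even P rfl he
    have hx' : ((altC P).d i (i+1)) x = 0 := hx
    rw [h1] at hx'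
    have hx0 : x = 0 := hx'
    refine ⟨0, ?_⟩
    show ((altC P).d (i-1) i) 0 = x
    rw [map_zero, hx0]; rfl
  · have h2 : (altC P).d (i-1) i = 𝟙 P :=
      altC_d_even P (by ring) (by rw [Int.even_sub_one]; exact Int.not_even_iff_odd.2 ho)
    refine ⟨x, ?_⟩
    show ((altC P).d (i-1) i) x = x
    rw [h2]
    rfl

lemma altC_homExactAt (P : ModuleCat.{u} Λ) (Q : ModuleCat.{u} Λ) (i : ℤ) :
    ((((preadditiveYoneda.obj Q).mapHomologicalComplex _).obj (altC P).op)).ExactAt i := by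
  rw [HomologicalComplex.exactAt_iff' _ (i+1) i (i-1)
    (((ComplexShape.up ℤ).symm).prev_eq' (by simp))
    (((ComplexShape.up ℤ).symm).next_eq' (by simp)),
    ShortComplex.ab_exact_iff]
  intro (ψ : (altC P).X i ⟶ Q) hψ
  rcases Int.even_or_odd i with he | ho
  · refine ⟨ψ, ?_⟩
    show (altC P).d i (i+1) ≫ ψ = ψ
    rw [altC_d_even P rfl he]
    exact Category.id_comp ψ
  · have hψ0 : ψ = 0 := by
      have h2 : (altC P).d (i-1) i = 𝟙 P :=
        altC_d_even P (by ring) (by rw [Int.even_sub_one]; exact Int.not_even_iff_odd.2 ho)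
      have h3 : (altC P).d (i-1) i ≫ ψ = 0 := hψ
      rw [h2] at h3
      rw [← Category.id_comp ψ]
      exact h3
    refine ⟨0, ?_⟩
    show (altC P).d i (i+1) ≫ (0 : (altC P).X (i+1) ⟶ Q) = ψ
    rw [comp_zero, hψ0]

/-- A finitely generated projective module is a finitely generated Gorenstein projective. -/
lemma fgproj_isFGGproj (P : ModuleCat.{u} Λ) (hP : Projective P)
    (hfin : Module.Finite Λ P) : IsFGGorensteinProjective P := by
  refine ⟨altC P, ⟨fun i => hP, altC_exactAt P, fun Q _ i => altC_homExactAt P Q i⟩,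
    fun i => hfin, ⟨?_⟩⟩
  have h0 : (altC P).d (-1) 0 = 0 := altC_d_odd P (by decide)
  exact (cokernelZeroIsoTarget).symm ≪≫ (cokernelIsoOfEq h0.symm)
end AltComplex


section Dims
variable {Λ : Type u} [Ring Λ]

lemma isFGGproj_of_iso {A B : ModuleCat.{u} Λ} (e : A ≅ B)
    (hA : IsFGGorensteinProjective A) : IsFGGorensteinProjective B := by
  obtain ⟨K, hTA, hfg, ⟨e'⟩⟩ := hA
  exact ⟨K, hTA, hfg, ⟨e.symm ≪≫ e'⟩⟩

lemma resDimLE_of_iso (S : Set (ModuleCat.{u} Λ))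
    (hS : ∀ {A B : ModuleCat.{u} Λ}, (A ≅ B) → A ∈ S → B ∈ S) :
    ∀ (n : ℕ) {A B : ModuleCat.{u} Λ}, (A ≅ B) → ResDimLE S n A → ResDimLE S n B := by
  intro n
  induction n with
  | zero => exact fun e h => hS e h
  | succ n ih =>
    intro A B e h
    rcases h with h | ⟨X, f, hX, hf, hres⟩
    · exact Or.inl (hS e h)
    · refine Or.inr ⟨X, f ≫ e.hom, hX, epi_comp _ _, ?_⟩
      exact ih (kernelCompMono f e.hom).symm hres

lemma projΛ : Projective (ModuleCat.of Λ Λ) :=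
  (IsProjective.iff_projective Λ).1 inferInstance

/-- Existence of finite free covers with finitely generated kernels over Noetherian rings. -/
lemma exists_syzygy [IsNoetherianRing Λ] (M : ModuleCat.{u} Λ) (hM : Module.Finite Λ M) :
    ∃ (F : ModuleCat.{u} Λ) (g : F ⟶ M), Projective F ∧ Module.Finite Λ F ∧
      Function.Surjective g ∧ Module.Finite Λ (kerM g) := by
  obtain ⟨n, f, hf⟩ := Module.Finite.exists_fin' Λ M
  refine ⟨ModuleCat.of Λ (Fin n → Λ), ModuleCat.ofHom f, (IsProjective.iff_projective (Fin n → Λ)).1 inferInstance,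
    inferInstanceAs (Module.Finite Λ (Fin n → Λ)), hf, ?_⟩
  haveI : IsNoetherian Λ ↑(ModuleCat.of Λ (Fin n → Λ)) := inferInstanceAs (IsNoetherian Λ (Fin n → Λ))
  exact Module.Finite.iff_fg.2 (IsNoetherian.noetherian _)

/-- Claim 1: if `Ext^t(M,Λ)` vanishes for all `t > n` then `M` has Gorenstein dimension at
most `n`, assuming every totally reflexive module is Gorenstein projective. -/
lemma gdimLE_of_extVanish [IsNoetherianRing Λ]
    (hyp : ∀ X : ModuleCat.{u} Λ, Module.Finite Λ X →
        (∀ n : ℕ, 1 ≤ n → ExtVanish X (ModuleCat.of Λ Λ) n) → IsFGGorensteinProjective X) :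
    ∀ (n : ℕ) (M : ModuleCat.{u} Λ), Module.Finite Λ M →
      (∀ t : ℕ, n < t → ExtVanish M (ModuleCat.of Λ Λ) t) → GdimLE n M := by
  intro n
  induction n with
  | zero =>
    intro M hM hvan
    exact hyp M hM (fun t ht => hvan t ht)
  | succ n ih =>
    intro M hM hvan
    obtain ⟨F, g, hFproj, hFfin, hgsurj, hkerfin⟩ := exists_syzygy M hM
    refine Or.inr ⟨F, g, fgproj_isFGGproj F hFproj hFfin,
      (ModuleCat.epi_iff_surjective g).2 hgsurj, ?_⟩
    have hker : ∀ t : ℕ, n < t → ExtVanish (kerM g) (ModuleCat.of Λ Λ) t := by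
      intro t ht
      have e := extVanish_succ_iff (kerSES g) (kerSES_shortExact g hgsurj) hFproj
        (ModuleCat.of Λ Λ) t (by omega)
      exact e.1 (hvan (t+1) (by omega))
    have hres := ih (kerM g) hkerfin hker
    exact resDimLE_of_iso _ (fun e h => isFGGproj_of_iso e h) n
      (ModuleCat.kernelIsoKer g).symm hres

/-- The hard direction: modules of Gorenstein dimension at most `n` have vanishing
`Ext^t(−,Λ)` for `t > n`. -/
lemma extVanish_of_gdimLE :
    ∀ (n : ℕ) (M : ModuleCat.{u} Λ), GdimLE n M →
      ∀ t : ℕ, n < t → ExtVanish M (ModuleCat.of Λ Λ) t := by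
  intro n
  induction n with
  | zero =>
    intro M hres t ht
    exact gproj_extVanish hres (ModuleCat.of Λ Λ) projΛ t (by omega)
  | succ n ih =>
    intro M hres t ht
    rcases hres with h | ⟨G, f, hG, hf, hres⟩
    · exact gproj_extVanish h (ModuleCat.of Λ Λ) projΛ t (by omega)
    · obtain ⟨s, rfl⟩ : ∃ s, t = s + 1 := ⟨t - 1, by omega⟩
      have hT : (ShortComplex.mk (kernel.ι f) f (kernel.condition f)).ShortExact :=
        { exact := ShortComplex.exact_of_f_is_kernel _ (kernelIsKernel f)
          mono_f := inferInstance
          epi_g := hf }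
      exact quotient_vanish _ hT (ModuleCat.of Λ Λ) s (by omega)
        (ih (kernel f) hres s (by omega))
        (fun r hr => gproj_extVanish hG (ModuleCat.of Λ Λ) projΛ r hr)

end Dims

/-- For a Noetherian ring `Λ`, every finitely generated module `X` with
`Ext^n(X,Λ) = 0` for all `n ≥ 1` is Gorenstein-projective if and only if for every finitely
generated module `M` the Gorenstein dimension of `M` equals `sup{t | Ext^t(M,Λ) ≠ 0}`. -/
theorem stable_eq_gorensteinProjective_iff_gdim_eq_extSup
    {Λ : Type u} [Ring Λ] [IsNoetherianRing Λ] :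
    (∀ X : ModuleCat.{u} Λ, Module.Finite Λ X →
        (∀ n : ℕ, 1 ≤ n → ExtVanish X (ModuleCat.of Λ Λ) n) → IsFGGorensteinProjective X) ↔
      (∀ M : ModuleCat.{u} Λ, Module.Finite Λ M → Gdim M = ExtSup M) := by
  constructor
  · intro hyp M hM
    apply le_antisymm
    · by_cases hE : ExtSup M = ⊤
      · rw [hE]
        exact le_top
      · obtain ⟨n, hn⟩ := WithTop.ne_top_iff_exists.1 hE
        have hvan : ∀ t : ℕ, n < t → ExtVanish M (ModuleCat.of Λ Λ) t := by
          intro t ht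
          by_contra hc
          have h1 : (t : ℕ∞) ≤ ExtSup M := le_sSup ⟨t, rfl, hc⟩
          rw [← hn] at h1
          have h2 : t ≤ n := Nat.cast_le.mp h1
          omega
        have hg := gdimLE_of_extVanish hyp n M hM hvan
        calc Gdim M ≤ (n : ℕ∞) := sInf_le ⟨n, rfl, hg⟩
        _ = ExtSup M := hn
    · refine le_sInf ?_
      rintro b ⟨m, rfl, hm⟩
      refine sSup_le ?_
      rintro x ⟨t, rfl, ht⟩
      by_contra hlt
      push_neg at hlt
      have hmt : m < t := by exact_mod_cast hlt
      exact ht (extVanish_of_gdimLE m M hm t hmt)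
  · intro h2 X hX hvan
    have hE0 : ExtSup X = 0 := by
      apply le_antisymm _ zero_le
      refine sSup_le ?_
      rintro x ⟨t, rfl, ht⟩
      rcases Nat.eq_zero_or_pos t with rfl | htpos
      · exact le_refl _
      · exact absurd (hvan t htpos) ht
    have hG : Gdim X = 0 := (h2 X hX).trans hE0
    have h0mem : (0 : ℕ∞) ∈ {n : ℕ∞ | ∃ m : ℕ, n = (m : ℕ∞) ∧ GdimLE m X} := by
      by_contra hc
      have hone : (1 : ℕ∞) ≤ Gdim X := by
        refine le_sInf ?_
        rintro b ⟨m, rfl, hm⟩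
        rcases Nat.eq_zero_or_pos m with rfl | hmpos
        · exact absurd (⟨0, rfl, hm⟩ : ∃ m' : ℕ, ((0:ℕ∞) = (m' : ℕ∞) ∧ GdimLE m' X)) hc
        · exact_mod_cast hmpos
      rw [hG] at hone
      exact absurd hone (by simp)
    obtain ⟨m, hm0, hm⟩ := h0mem
    have hm' : m = 0 := by exact_mod_cast hm0.symm
    subst hm'
    exact hm


end Paper
end
end

section
/- Let A be an abelian category with enough projectives and let X be a resolving subcategory of A such that Ext^n(X, P) = 0 for all X ∈ X, all projectives P and all n ≥ 1. Then the syzygy functor Ω : X̲ → X̲ on the stable category of X modulo projectives is fully faithful. -/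
open CategoryTheory Limits

noncomputable section

namespace Paper

universe w v u

variable {C : Type u} [Category.{v} C] [Abelian C]

section Aux

open Projective CategoryTheory.ProjectiveResolution

variable [EnoughProjectives C]
/-- A projective resolution complex of `A` starting with a chosen epimorphism `p : P ⟶ A`. -/
def resComplex {P A : C} (p : P ⟶ A) : ChainComplex C ℕ :=
  ChainComplex.mk' P (Projective.syzygies p) (Projective.d p)
    (fun f => ⟨_, Projective.d f, by exact (Category.assoc _ _ _).trans (by rw [kernel.condition]; exact comp_zero)⟩)

lemma resComplex_d_1_0 {P A : C} (p : P ⟶ A) :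
    (resComplex p).d 1 0 = Projective.d p := by
  simp [resComplex]

lemma resComplex_exactAt_succ {P A : C} (p : P ⟶ A) (n : ℕ) :
    (resComplex p).ExactAt (n + 1) := by
  rw [HomologicalComplex.exactAt_iff' _ (n + 2) (n + 1) n (by simp) (by simp)]
  have hE := exact_d_f ((resComplex p).d (n + 1) n)
  refine ShortComplex.exact_of_iso ?_ hE
  refine ShortComplex.isoMk (ChainComplex.mk'XIso _ _ _ _ n : (resComplex p).X (n + 2) ≅ _).symm
    (Iso.refl _) (Iso.refl _) ?_ ?_
  · exact (congrArg _ (ChainComplex.mk'_d _ _ _ _ n)).trans ((Iso.inv_hom_id_assoc _ _).trans (Category.comp_id _).symm)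
  · exact (Category.id_comp _).trans (Category.comp_id _).symm

instance resComplex_projective {P A : C} (p : P ⟶ A) [Projective P] (n : ℕ) :
    Projective ((resComplex p).X n) := by
  obtain (_ | _ | _ | n) := n
  · exact ‹Projective P›
  all_goals apply Projective.projective_over

/-- The projective resolution of `A` built on a chosen epimorphism `p : P ⟶ A`. -/
def res {P A : C} (p : P ⟶ A) [Projective P] [Epi p] : ProjectiveResolution A where
  complex := resComplex p
  projective := resComplex_projective p
  π := (ChainComplex.toSingle₀Equiv _ _).symm ⟨p, by
          rw [resComplex_d_1_0]; exact (Category.assoc _ _ _).trans ((congrArg (Projective.π (kernel p) ≫ ·) (kernel.condition p)).trans comp_zero)⟩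
  quasiIso := ⟨fun n => by
    cases n
    · rw [ChainComplex.quasiIsoAt₀_iff, ShortComplex.quasiIso_iff_of_zeros']
      · refine (ShortComplex.exact_and_epi_g_iff_of_iso ?_).2
          ⟨exact_d_f p, by dsimp; infer_instance⟩
        exact ShortComplex.isoMk (Iso.refl _) (Iso.refl _) (Iso.refl _)
          (by simp [resComplex]; exact (Category.id_comp _).trans (Category.comp_id _).symm) (by simp; exact (Category.id_comp _).trans ((ChainComplex.toSingle₀Equiv_symm_apply_f_zero (C := resComplex p) (X := A) p _).symm.trans (Category.comp_id _).symm))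
      all_goals rfl
    · rw [quasiIsoAt_iff_exactAt']
      · apply resComplex_exactAt_succ
      · apply ChainComplex.exactAt_succ_single_obj⟩

/-- The key consequence of `Ext^1(A, R) = 0` : any map `kernel p ⟶ R` extends to `P`. -/
lemma extend_of_extVanish {P A : C} (p : P ⟶ A) [Projective P] [Epi p] (R : C)
    (hv : ExtVanish A R 1) (h : kernel p ⟶ R) :
    ∃ h' : P ⟶ R, kernel.ι p ≫ h' = h := by
  have e := (res p).isoExt (R := ℤ) 1 R
  haveI : Subsingleton (((_root_.Ext ℤ C 1).obj (Opposite.op A)).obj R) := hv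
  haveI : Subsingleton ↑(((res p).complex.linearYonedaObj ℤ R).homology 1) :=
    @Equiv.subsingleton _ _ (((forget (ModuleCat ℤ)).mapIso e).toEquiv.symm) hv
  have hz : ((res p).complex.linearYonedaObj ℤ R).ExactAt 1 :=
    (HomologicalComplex.exactAt_iff_isZero_homology _ _).2
      (ModuleCat.isZero_of_subsingleton _)
  rw [HomologicalComplex.exactAt_iff' _ 0 1 2 (by simp) (by simp),
    ShortComplex.moduleCat_exact_iff] at hz
  have hd10 : (res p).complex.d 1 0 = Projective.d p := resComplex_d_1_0 p
  have hd21 : (res p).complex.d 2 1 ≫ Projective.π (kernel p) = 0 := by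
    rw [← cancel_mono (kernel.ι p)]
    have h2 := (res p).complex.d_comp_d 2 1 0
    rw [hd10] at h2
    exact (Category.assoc _ _ _).trans (by simp only [Projective.d] at h2; exact h2.trans zero_comp.symm)
  obtain ⟨y, hy⟩ := hz ((Projective.π (kernel p) ≫ h : (res p).complex.X 1 ⟶ R)) (by
    show (res p).complex.d 2 1 ≫ (Projective.π (kernel p) ≫ h) = 0
    exact (Category.assoc _ _ _).symm.trans (by rw [hd21]; exact zero_comp))
  have hy' : (res p).complex.d 1 0 ≫ (y : (res p).complex.X 0 ⟶ R)
      = Projective.π (kernel p) ≫ h := hy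
  refine ⟨y, ?_⟩
  rw [← cancel_epi (Projective.π (kernel p)), ← hy', hd10]
  simp [Projective.d]; exact (Category.assoc _ _ _).symm

end Aux

/-- Let `A` be an abelian category with enough projectives and `X` a
resolving subcategory with `Ext^n(X, P) = 0` for all `X ∈ X`, projectives `P`, `n ≥ 1`.
Then the syzygy functor `Ω` on the stable category of `X` modulo projectives is fully
faithful: for objects `A, B ∈ X`, syzygies taken along any epimorphisms `p : P → A`,
`q : Q → B` from projectives, the induced map on stable `Hom`-groups is bijective. -/
theorem syzygy_fully_faithful_on_stable_category
    [EnoughProjectives C] (S : Set C) (hres : IsResolving S)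
    (hext : ∀ A ∈ S, ∀ P : C, Projective P → ∀ n : ℕ, 1 ≤ n → ExtVanish A P n)
    {A B : C} (hA : A ∈ S) (hB : B ∈ S)
    (P Q : C) (hP : Projective P) (hQ : Projective Q)
    (p : P ⟶ A) (q : Q ⟶ B) [Epi p] [Epi q] :
    -- faithfulness: if `Ω f` is stably trivial then so is `f`
    (∀ (f : A ⟶ B) (f' : P ⟶ Q) (w : p ≫ f = f' ≫ q),
        FactorsThroughProjective (kernel.map p q f' f w) → FactorsThroughProjective f) ∧
    -- fullness: every stable map `kernel p ⟶ kernel q` is, up to stable equivalence,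
    -- induced by a map `A ⟶ B`
    (∀ g : kernel p ⟶ kernel q, ∃ (f : A ⟶ B) (f' : P ⟶ Q) (w : p ≫ f = f' ≫ q),
        StablyEq (kernel.map p q f' f w) g) := by
  constructor
  · rintro f f' w ⟨R, hR, s, t, hst⟩
    obtain ⟨s', hs'⟩ := extend_of_extVanish p R (hext A hA R hR 1 le_rfl) s
    have hv : kernel.ι p ≫ (f' - s' ≫ (t ≫ kernel.ι q)) = 0 := by
      have h1 : kernel.ι p ≫ f' = (s ≫ t) ≫ kernel.ι q := by rw [hst]; simp
      simp [Preadditive.comp_sub, h1, reassoc_of% hs']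
    refine ⟨Q, hQ, Abelian.epiDesc p _ hv, q, ?_⟩
    rw [← cancel_epi p, ← Category.assoc, Abelian.comp_epiDesc]
    simp [Preadditive.sub_comp, w, Category.assoc]
  · intro g
    obtain ⟨f', hf'⟩ := extend_of_extVanish p Q (hext A hA Q hQ 1 le_rfl) (g ≫ kernel.ι q)
    have hv : kernel.ι p ≫ (f' ≫ q) = 0 := by
      rw [← Category.assoc, hf', Category.assoc, kernel.condition, comp_zero]
    refine ⟨Abelian.epiDesc p _ hv, f', Abelian.comp_epiDesc _ _ _, ?_⟩
    have heq : kernel.map p q f' (Abelian.epiDesc p _ hv) (Abelian.comp_epiDesc _ _ _) = g := by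
      rw [← cancel_mono (kernel.ι q)]
      simp [hf']
    unfold StablyEq
    rw [heq, sub_self]
    exact ⟨Q, hQ, 0, 0, by simp⟩

end Paper
end
end

section
/- Let A be an abelian category with enough projectives and let X ⊆ GProj(A) be a resolving subcategory of the Gorenstein-projective objects such that every Gorenstein-projective object has finite X-resolution dimension, bounded by some d. Then X = GProj(A). -/
open CategoryTheory Limits

noncomputable section

namespace Paper

universe w v u

variable {C : Type u} [Category.{v} C] [Abelian C]

section Statement14Aux

variable {X : Set C}

lemma ResDimLE.of_mem {A : C} (h : A ∈ X) : ∀ n, ResDimLE X n A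
  | 0 => h
  | (_ + 1) => Or.inl h

lemma kernelSequence_shortExact {A B : C} (f : A ⟶ B) [Epi f] :
    (ShortComplex.mk (kernel.ι f) f (kernel.condition f)).ShortExact :=
  ShortComplex.ShortExact.mk'
    (ShortComplex.exact_of_f_is_kernel _ (kernelIsKernel f)) inferInstance inferInstance

lemma kernel_mem (hres : IsResolving X) {A B : C} (f : A ⟶ B) [Epi f]
    (hA : A ∈ X) (hB : B ∈ X) : kernel f ∈ X :=
  hres.kernelClosed _ (kernelSequence_shortExact f) hA hB

lemma ResDimLE.of_iso (hres : IsResolving X) :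
    ∀ (n : ℕ) {A B : C}, (A ≅ B) → ResDimLE X n A → ResDimLE X n B
  | 0, _, _, e, h => hres.isoClosed e h
  | (n + 1), _, _, e, h => by
    rcases h with h | ⟨W, f, hW, hf, hk⟩
    · exact Or.inl (hres.isoClosed e h)
    · haveI := hf
      exact Or.inr ⟨W, f ≫ e.hom, hW, epi_comp f e.hom,
        ResDimLE.of_iso hres n (kernelCompMono f e.hom).symm hk⟩

/-- The kernel of the second projection of a pullback is isomorphic to the kernel of the
first morphism. -/
noncomputable def kernelPullbackSndIso {W P A : C} (g : W ⟶ A) (f : P ⟶ A) :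
    kernel (pullback.snd g f) ≅ kernel g where
  hom := kernel.lift g (kernel.ι _ ≫ pullback.fst g f)
    (by rw [Category.assoc, pullback.condition, ← Category.assoc, kernel.condition, zero_comp])
  inv := kernel.lift (pullback.snd g f)
    (pullback.lift (kernel.ι g) 0 (by simp)) (by simp [pullback.lift_fst, pullback.lift_snd])
  hom_inv_id := by
    rw [← cancel_mono (kernel.ι (pullback.snd g f))]
    apply pullback.hom_ext <;> simp [pullback.lift_fst, pullback.lift_snd]
  inv_hom_id := by
    rw [← cancel_mono (kernel.ι g)]
    simp [pullback.lift_fst, pullback.lift_snd]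

/-- The kernel of the first projection of a pullback is isomorphic to the kernel of the
second morphism. -/
noncomputable def kernelPullbackFstIso {W P A : C} (g : W ⟶ A) (f : P ⟶ A) :
    kernel (pullback.fst g f) ≅ kernel f where
  hom := kernel.lift f (kernel.ι _ ≫ pullback.snd g f)
    (by rw [Category.assoc, ← pullback.condition, ← Category.assoc, kernel.condition, zero_comp])
  inv := kernel.lift (pullback.fst g f)
    (pullback.lift 0 (kernel.ι f) (by simp)) (by simp [pullback.lift_fst, pullback.lift_snd])
  hom_inv_id := by
    rw [← cancel_mono (kernel.ι (pullback.fst g f))]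
    apply pullback.hom_ext <;> simp [pullback.lift_fst, pullback.lift_snd]
  inv_hom_id := by
    rw [← cancel_mono (kernel.ι f)]
    simp [pullback.lift_fst, pullback.lift_snd]

/-- The kernel of `f ⊞ 𝟙 P` is isomorphic to the kernel of `f`. -/
noncomputable def kernelBiprodMapIso {A B P : C} (f : A ⟶ B) :
    kernel (biprod.map f (𝟙 P)) ≅ kernel f where
  hom := kernel.lift f (kernel.ι _ ≫ biprod.fst)
    (by rw [Category.assoc, ← biprod.map_fst f (𝟙 P), ← Category.assoc, kernel.condition,
      zero_comp])
  inv := kernel.lift (biprod.map f (𝟙 P)) (kernel.ι f ≫ biprod.inl)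
    (by rw [Category.assoc, biprod.inl_map, ← Category.assoc, kernel.condition, zero_comp])
  hom_inv_id := by
    have hsnd : kernel.ι (biprod.map f (𝟙 P)) ≫ biprod.snd = 0 := by
      have h1 : kernel.ι (biprod.map f (𝟙 P)) ≫ biprod.map f (𝟙 P) ≫ biprod.snd
          = kernel.ι (biprod.map f (𝟙 P)) ≫ biprod.snd := by
        rw [biprod.map_snd, Category.comp_id]
      rw [← Category.assoc, kernel.condition, zero_comp] at h1
      exact h1.symm
    rw [← cancel_mono (kernel.ι (biprod.map f (𝟙 P)))]
    apply biprod.hom_ext <;> simp [hsnd]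
  inv_hom_id := by
    rw [← cancel_mono (kernel.ι f)]
    simp

lemma ResDimLE.biprod (hres : IsResolving X) {P : C} (hP : P ∈ X) :
    ∀ (n : ℕ) {A : C}, ResDimLE X n A → ResDimLE X n (A ⊞ P)
  | 0, A, h =>
      hres.extClosed _ (ShortComplex.Splitting.ofHasBinaryBiproduct A P).shortExact h hP
  | (n + 1), A, h => by
    rcases h with h | ⟨W, f, hW, hf, hk⟩
    · exact Or.inl
        (hres.extClosed _ (ShortComplex.Splitting.ofHasBinaryBiproduct A P).shortExact h hP)
    · haveI := hf
      exact Or.inr ⟨W ⊞ P, biprod.map f (𝟙 P),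
        hres.extClosed _ (ShortComplex.Splitting.ofHasBinaryBiproduct W P).shortExact hW hP,
        inferInstance,
        ResDimLE.of_iso hres n (kernelBiprodMapIso f).symm hk⟩

/-- The pullback along a mono `kernel.ι p` is isomorphic to the kernel of `g ≫ p`. -/
noncomputable def pullbackKernelIso {V B W : C} (g : V ⟶ B) (p : B ⟶ W) :
    kernel (g ≫ p) ≅ pullback g (kernel.ι p) where
  hom := pullback.lift (kernel.ι (g ≫ p))
    (kernel.lift p (kernel.ι (g ≫ p) ≫ g) (by rw [Category.assoc, kernel.condition]))
    (by rw [kernel.lift_ι])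
  inv := kernel.lift (g ≫ p) (pullback.fst g (kernel.ι p))
    (by rw [← Category.assoc, pullback.condition, Category.assoc, kernel.condition, comp_zero])
  hom_inv_id := by
    rw [← cancel_mono (kernel.ι (g ≫ p))]
    simp [pullback.lift_fst, pullback.lift_snd]
  inv_hom_id := by
    apply pullback.hom_ext
    · simp [pullback.lift_fst, pullback.lift_snd]
    · rw [← cancel_mono (kernel.ι p)]
      simp [pullback.condition, pullback.lift_fst, pullback.lift_snd]

/-- If `B` has `X`-resolution dimension at most `n` and `p : B ⟶ W` is an epimorphism onto
an object of `X`, then `kernel p` has `X`-resolution dimension at most `n`. -/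
lemma resDimLE_kernel_of_epi_into_mem (hres : IsResolving X) :
    ∀ (n : ℕ) {B W : C} (p : B ⟶ W), Epi p → W ∈ X →
      ResDimLE X n B → ResDimLE X n (kernel p)
  | 0, B, W, p, hp, hW, h => by
      haveI := hp; exact kernel_mem hres p h hW
  | (n + 1), B, W, p, hp, hW, h => by
    haveI := hp
    rcases h with h | ⟨V, g, hV, hg, hk⟩
    · exact Or.inl (kernel_mem hres p h hW)
    · haveI := hg
      have hD : pullback g (kernel.ι p) ∈ X :=
        hres.isoClosed (pullbackKernelIso g p) (kernel_mem hres (g ≫ p) hV hW)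
      exact Or.inr ⟨pullback g (kernel.ι p), pullback.snd g (kernel.ι p), hD, inferInstance,
        ResDimLE.of_iso hres n (kernelPullbackSndIso g (kernel.ι p)).symm hk⟩

/-- If `A` has `X`-resolution dimension at most `n + 1` and `f : P ⟶ A` is an epimorphism
from a projective object, then `kernel f` has `X`-resolution dimension at most `n`. -/
lemma resDimLE_kernel_of_epi_from_proj (hres : IsResolving X) (n : ℕ) {P A : C}
    (f : P ⟶ A) (hf : Epi f) (hP : Projective P) (h : ResDimLE X (n + 1) A) :
    ResDimLE X n (kernel f) := by
  haveI := hf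
  haveI := hP
  rcases h with h | ⟨V, g, hV, hg, hk⟩
  · exact ResDimLE.of_mem (kernel_mem hres f (hres.projMem P hP) h) n
  · haveI := hg
    have hSE : (ShortComplex.mk (kernel.ι (pullback.snd g f)) (pullback.snd g f)
        (kernel.condition _)).ShortExact := kernelSequence_shortExact _
    let sp := ShortComplex.Splitting.ofExactOfSection _ hSE.exact
      (Projective.factorThru (𝟙 P) (pullback.snd g f)) (Projective.factorThru_comp _ _)
      hSE.mono_f
    have hDres : ResDimLE X n (pullback g f) :=
      ResDimLE.of_iso hres n sp.isoBinaryBiproduct.symm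
        (ResDimLE.biprod hres (hres.projMem P hP) n
          (ResDimLE.of_iso hres n (kernelPullbackSndIso g f).symm hk))
    exact ResDimLE.of_iso hres n (kernelPullbackFstIso g f)
      (resDimLE_kernel_of_epi_into_mem hres n (pullback.fst g f) inferInstance hV hDres)

lemma exact_sc'_congr {ι : Type w} {c : ComplexShape ι} (K : HomologicalComplex C c)
    {a b e a' b' e' : ι} (ha : a = a') (hb : b = b') (he : e = e') :
    (K.sc' a b e).Exact ↔ (K.sc' a' b' e').Exact := by
  subst ha; subst hb; subst he; exact Iff.rfl

lemma ShortComplex.exact_congr_f {B D E : C} {f f' : B ⟶ D} (h : f = f') {g : D ⟶ E}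
    (w : f ≫ g = 0) (w' : f' ≫ g = 0) :
    (ShortComplex.mk f g w).Exact ↔ (ShortComplex.mk f' g w').Exact := by
  subst h; exact Iff.rfl

lemma exact_mk_of_epi_precomp {A B D E : C} (p : A ⟶ B) [Epi p] (f : B ⟶ D) (g : D ⟶ E)
    (w : (p ≫ f) ≫ g = 0) (w' : f ≫ g = 0)
    (h : (ShortComplex.mk (p ≫ f) g w).Exact) : (ShortComplex.mk f g w').Exact := by
  let φ : ShortComplex.mk (p ≫ f) g w ⟶ ShortComplex.mk f g w' :=
    { τ₁ := p, τ₂ := 𝟙 _, τ₃ := 𝟙 _, comm₁₂ := by simp, comm₂₃ := by simp }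
  haveI : Epi φ.τ₁ := by show Epi p; infer_instance
  haveI : IsIso φ.τ₂ := by show IsIso (𝟙 _); infer_instance
  haveI : Mono φ.τ₃ := by show Mono (𝟙 _); infer_instance
  exact (ShortComplex.exact_iff_of_epi_of_isIso_of_mono φ).1 h

/-- In a totally acyclic complex, the short sequence
`0 ⟶ coker (d i j) ⟶ K.X k ⟶ coker (d j k) ⟶ 0` is short exact. -/
lemma cokernelSequence_shortExact (K : CochainComplex C ℤ) (hK : IsTotallyAcyclic K)
    (i j k : ℤ) (hij : i + 1 = j) (hjk : j + 1 = k) :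
    (ShortComplex.mk (cokernel.desc (K.d i j) (K.d j k) (K.d_comp_d i j k))
      (cokernel.π (K.d j k))
      (by rw [← cancel_epi (cokernel.π (K.d i j))]; simp)).ShortExact := by
  have hex : (K.sc' i j k).Exact := by
    rw [← K.exactAt_iff' i j k (by rw [CochainComplex.prev]; omega)
      (by rw [CochainComplex.next]; omega)]
    exact hK.exactAt j
  haveI : Mono (cokernel.desc (K.d i j) (K.d j k) (K.d_comp_d i j k)) :=
    (ShortComplex.exact_iff_mono_cokernel_desc (K.sc' i j k)).1 hex
  refine ShortComplex.ShortExact.mk' ?_ inferInstance inferInstance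
  refine exact_mk_of_epi_precomp (cokernel.π (K.d i j)) _ _
    (by simp) _ ?_
  rw [ShortComplex.exact_congr_f (f' := K.d j k) (by rw [cokernel.π_desc])
    _ (cokernel.condition _)]
  exact ShortComplex.exact_of_g_is_cokernel _ (cokernelIsCokernel (K.d j k))

/-- In a totally acyclic complex, the kernel of `cokernel.π (d j k)` is the previous
cosyzygy `coker (d i j)`. -/
noncomputable def kernelCokernelπIso (K : CochainComplex C ℤ) (hK : IsTotallyAcyclic K)
    (i j k : ℤ) (hij : i + 1 = j) (hjk : j + 1 = k) :
    kernel (cokernel.π (K.d j k)) ≅ cokernel (K.d i j) := by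
  have hSE := cokernelSequence_shortExact K hK i j k hij hjk
  haveI := hSE.mono_f
  exact IsLimit.conePointUniqueUpToIso (kernelIsKernel _) hSE.exact.fIsKernel

/-- The complex `K` reindexed by shifting all degrees by `j` (without sign changes). -/
def shiftK (K : CochainComplex C ℤ) (j : ℤ) : CochainComplex C ℤ where
  X i := K.X (i + j)
  d a b := K.d (a + j) (b + j)
  shape a b h := K.shape _ _ (fun h' => h (by
    simp only [ComplexShape.up_Rel] at h' ⊢
    omega))
  d_comp_d' _ _ _ _ _ := K.d_comp_d _ _ _

lemma shiftK_exactAt (K : CochainComplex C ℤ) (j : ℤ) (i : ℤ) (h : K.ExactAt (i + j)) :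
    (shiftK K j).ExactAt i := by
  rw [(shiftK K j).exactAt_iff' (i - 1) i (i + 1) (by rw [CochainComplex.prev])
    (by rw [CochainComplex.next])]
  have e1 : ((shiftK K j).sc' (i - 1) i (i + 1)).Exact ↔
      (K.sc' (i - 1 + j) (i + j) (i + 1 + j)).Exact := Iff.rfl
  rw [e1, exact_sc'_congr K (show i - 1 + j = (i + j) - 1 by omega) rfl
    (show i + 1 + j = (i + j) + 1 by omega),
    ← K.exactAt_iff' ((i + j) - 1) (i + j) ((i + j) + 1) (by rw [CochainComplex.prev])
      (by rw [CochainComplex.next])]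
  exact h

lemma shiftK_homExactAt (K : CochainComplex C ℤ) (j : ℤ) (P : C)
    (h : ∀ i, ((((preadditiveYoneda.obj P).mapHomologicalComplex _).obj K.op)).ExactAt i)
    (i : ℤ) :
    ((((preadditiveYoneda.obj P).mapHomologicalComplex _).obj (shiftK K j).op)).ExactAt i := by
  set M := ((preadditiveYoneda.obj P).mapHomologicalComplex _).obj K.op with hM
  set N := ((preadditiveYoneda.obj P).mapHomologicalComplex _).obj (shiftK K j).op with hN
  have hprev : ((ComplexShape.up ℤ).symm).prev i = i + 1 :=
    ComplexShape.prev_eq' _ (show i + 1 = i + 1 from rfl)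
  have hnext : ((ComplexShape.up ℤ).symm).next i = i - 1 :=
    ComplexShape.next_eq' _ (show (i - 1) + 1 = i by omega)
  rw [N.exactAt_iff' (i + 1) i (i - 1) hprev hnext]
  have e1 : (N.sc' (i + 1) i (i - 1)).Exact ↔
      (M.sc' (i + 1 + j) (i + j) (i - 1 + j)).Exact := Iff.rfl
  rw [e1, exact_sc'_congr M (show i + 1 + j = (i + j) + 1 by omega) rfl
    (show i - 1 + j = (i + j) - 1 by omega),
    ← M.exactAt_iff' ((i + j) + 1) (i + j) ((i + j) - 1)
      (ComplexShape.prev_eq' _ (show (i + j) + 1 = (i + j) + 1 from rfl))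
      (ComplexShape.next_eq' _ (show ((i + j) - 1) + 1 = i + j by omega))]
  exact h (i + j)

lemma shiftK_isTotallyAcyclic (K : CochainComplex C ℤ) (hK : IsTotallyAcyclic K) (j : ℤ) :
    IsTotallyAcyclic (shiftK K j) where
  projective i := hK.projective (i + j)
  exactAt i := shiftK_exactAt K j i (hK.exactAt (i + j))
  homExactAt P hP i := shiftK_homExactAt K j P (hK.homExactAt P hP) i

/-- Transport of cokernels of differentials along equalities of indices. -/
noncomputable def cokernelDCongr (K : CochainComplex C ℤ) {a b a' b' : ℤ}
    (ha : a = a') (hb : b = b') : cokernel (K.d a b) ≅ cokernel (K.d a' b') := by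
  subst ha; subst hb; exact Iso.refl _

lemma isGP_cokernel (K : CochainComplex C ℤ) (hK : IsTotallyAcyclic K) {i j : ℤ}
    (hij : i + 1 = j) : IsGorensteinProjective (cokernel (K.d i j)) :=
  ⟨shiftK K j, shiftK_isTotallyAcyclic K hK j,
    ⟨cokernelDCongr K (show i = -1 + j by omega) (show j = 0 + j by omega)⟩⟩

lemma descent (hres : IsResolving X) (K : CochainComplex C ℤ) (hK : IsTotallyAcyclic K) :
    ∀ (n : ℕ) (i j : ℤ), i + 1 = j → ResDimLE X n (cokernel (K.d i j)) →
      cokernel (K.d (i - n) (j - n)) ∈ X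
  | 0, i, j, hij, h =>
      hres.isoClosed (cokernelDCongr K (by omega) (by omega)) h
  | (n + 1), i, j, hij, h => by
    have h1 : ResDimLE X n (kernel (cokernel.π (K.d i j))) :=
      resDimLE_kernel_of_epi_from_proj hres n (cokernel.π (K.d i j)) inferInstance
        (hK.projective j) h
    have h2 : ResDimLE X n (cokernel (K.d (i - 1) i)) :=
      ResDimLE.of_iso hres n (kernelCokernelπIso K hK (i - 1) i j (by omega) hij) h1
    have h3 := descent hres K hK n (i - 1) i (by omega) h2
    exact hres.isoClosed (cokernelDCongr K (by omega) (by omega)) h3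

end Statement14Aux

/-- Let `A` be an abelian category with enough projectives and
`X ⊆ GProj(A)` a resolving subcategory such that every Gorenstein-projective object has
`X`-resolution dimension at most `d`. Then `X` is all of `GProj(A)`. -/
theorem resolving_subcategory_of_gorensteinProjectives_with_finite_resdim_is_all
    [EnoughProjectives C] (X : Set C)
    (hsub : ∀ A ∈ X, IsGorensteinProjective A)
    (hres : IsResolving X)
    (d : ℕ) (hd : ∀ A : C, IsGorensteinProjective A → ResDimLE X d A) :
    X = {A : C | IsGorensteinProjective A} := by
  apply Set.Subset.antisymm
  · intro A hA
    exact hsub A hA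
  · rintro A ⟨K, hK, ⟨e⟩⟩
    have hGP : IsGorensteinProjective (cokernel (K.d ((d : ℤ) - 1) (d : ℤ))) :=
      isGP_cokernel K hK (by omega)
    have h0 : ResDimLE X d (cokernel (K.d ((d : ℤ) - 1) (d : ℤ))) := hd _ hGP
    have h1 := descent hres K hK d ((d : ℤ) - 1) (d : ℤ) (by omega) h0
    have h2 : cokernel (K.d (-1) 0) ∈ X :=
      hres.isoClosed (cokernelDCongr K (by omega) (by omega)) h1
    exact hres.isoClosed e.symm h2

end Paper
end
end
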